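/- arXiv:2205.09464 — 2 statements merged into one kernel-verified Lean document; each statement's English description precedes it below -/
import Mathlib

section
/- In a quasi-triangular Hopf algebra, the Drinfeld element u := m^op((id ⊗ S)(R)) (i.e., u = Σ S(b_i) a_i where R = Σ a_i ⊗ b_i) satisfies u X u^{-1} = S²(X) for all X ∈ H, provided u is invertible. -/
set_option maxHeartbeats 1600000
set_option synthInstance.maxHeartbeats 400000


open scoped TensorProduct

section
variable (k : Type*) [CommRing k] (H : Type*) [Ring H] [HopfAlgebra k H]

/-- The embedding of `H ⊗ H` into legs 1,2 of `H ⊗ (H ⊗ H)`. -/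
noncomputable def leg12 : H ⊗[k] H →ₐ[k] H ⊗[k] (H ⊗[k] H) :=
  Algebra.TensorProduct.map (AlgHom.id k H) Algebra.TensorProduct.includeLeft

/-- The embedding of `H ⊗ H` into legs 1,3 of `H ⊗ (H ⊗ H)`. -/
noncomputable def leg13 : H ⊗[k] H →ₐ[k] H ⊗[k] (H ⊗[k] H) :=
  Algebra.TensorProduct.map (AlgHom.id k H) Algebra.TensorProduct.includeRight

/-- The embedding of `H ⊗ H` into legs 2,3 of `H ⊗ (H ⊗ H)`. -/
noncomputable def leg23 : H ⊗[k] H →ₐ[k] H ⊗[k] (H ⊗[k] H) :=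
  Algebra.TensorProduct.includeRight

/-- `(Δ ⊗ id) : H ⊗ H →ₗ H ⊗ (H ⊗ H)` (reassociated). -/
noncomputable def comulLeft : H ⊗[k] H →ₗ[k] H ⊗[k] (H ⊗[k] H) :=
  (TensorProduct.assoc k H H H).toLinearMap ∘ₗ
    TensorProduct.map (Coalgebra.comul (R := k) (A := H)) LinearMap.id

/-- `(id ⊗ Δ) : H ⊗ H →ₗ H ⊗ (H ⊗ H)`. -/
noncomputable def comulRight : H ⊗[k] H →ₗ[k] H ⊗[k] (H ⊗[k] H) :=
  TensorProduct.map LinearMap.id (Coalgebra.comul (R := k) (A := H))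

/-- The opposite multiplication `m^op : H ⊗ H →ₗ H`, `a ⊗ b ↦ b * a`. -/
noncomputable def mulOp : H ⊗[k] H →ₗ[k] H :=
  (LinearMap.mul' k H) ∘ₗ (TensorProduct.comm k H H).toLinearMap

/-- The Drinfeld element `u := m^op((id ⊗ S)(R))`, i.e. `u = Σ S(bᵢ) aᵢ` for
`R = Σ aᵢ ⊗ bᵢ`. -/
noncomputable def drinfeldElement (R : H ⊗[k] H) : H :=
  mulOp k H ((TensorProduct.map LinearMap.id (HopfAlgebra.antipode (R := k))) R)

namespace DrinfeldAux
variable {k : Type*} [CommRing k] {H : Type*} [Ring H] [HopfAlgebra k H]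

open TensorProduct LinearMap

/-- shuffle `(a⊗b)⊗(c⊗d) ↦ (a⊗c)⊗(b⊗d)` -/
noncomputable def ttt (k H : Type*) [CommRing k] [Ring H] [HopfAlgebra k H] :
    ((H ⊗[k] H) ⊗[k] (H ⊗[k] H)) →ₗ[k] ((H ⊗[k] H) ⊗[k] (H ⊗[k] H)) :=
  (TensorProduct.tensorTensorTensorComm k H H H H).toLinearMap

@[simp] lemma ttt_tmul (a b c d : H) :
    ttt k H ((a ⊗ₜ b) ⊗ₜ (c ⊗ₜ d)) = (a ⊗ₜ c) ⊗ₜ (b ⊗ₜ d) := rfl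

/-- comultiplication on `H ⊗ H` -/
noncomputable def δH (k H : Type*) [CommRing k] [Ring H] [HopfAlgebra k H] :
    (H ⊗[k] H) →ₗ[k] (H ⊗[k] H) ⊗[k] (H ⊗[k] H) :=
  ttt k H ∘ₗ TensorProduct.map (Coalgebra.comul (R := k)) (Coalgebra.comul (R := k))

@[simp] lemma δH_tmul (a b : H) :
    δH k H (a ⊗ₜ b) = ttt k H ((Coalgebra.comul (R := k) a) ⊗ₜ (Coalgebra.comul (R := k) b)) := by
  simp [δH]

/-- counit on `H ⊗ H` -/
noncomputable def εH (k H : Type*) [CommRing k] [Ring H] [HopfAlgebra k H] :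
    (H ⊗[k] H) →ₗ[k] k :=
  (TensorProduct.lid k k).toLinearMap ∘ₗ
    TensorProduct.map (Coalgebra.counit (R := k)) (Coalgebra.counit (R := k))

@[simp] lemma εH_tmul (a b : H) :
    εH k H (a ⊗ₜ b) = Coalgebra.counit (R := k) a * Coalgebra.counit (R := k) b := by
  simp [εH, smul_eq_mul]

/-- convolution product on `Hom(H⊗H, H)` -/
noncomputable def conv (f g : H ⊗[k] H →ₗ[k] H) : H ⊗[k] H →ₗ[k] H :=
  LinearMap.mul' k H ∘ₗ TensorProduct.map f g ∘ₗ δH k H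

noncomputable def eConv (k H : Type*) [CommRing k] [Ring H] [HopfAlgebra k H] :
    H ⊗[k] H →ₗ[k] H :=
  Algebra.linearMap k H ∘ₗ εH k H

@[simp] lemma eConv_tmul (a b : H) :
    eConv k H (a ⊗ₜ b) =
      algebraMap k H (Coalgebra.counit (R := k) a * Coalgebra.counit (R := k) b) := by
  simp [eConv]

lemma conv_apply (f g : H ⊗[k] H →ₗ[k] H) (x : H ⊗[k] H) :
    conv f g x = LinearMap.mul' k H (TensorProduct.map f g (δH k H x)) := rfl

section coassoc

noncomputable abbrev T₂ (k H : Type*) [CommRing k] [Ring H] [HopfAlgebra k H] :=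
  (TensorProduct.tensorTensorTensorComm k (H ⊗[k] H) H (H ⊗[k] H) H).toLinearMap

noncomputable abbrev T₂' (k H : Type*) [CommRing k] [Ring H] [HopfAlgebra k H] :=
  (TensorProduct.tensorTensorTensorComm k H (H ⊗[k] H) H (H ⊗[k] H)).toLinearMap

lemma P1 : TensorProduct.map (δH k H) LinearMap.id ∘ₗ ttt k H =
    TensorProduct.map (ttt k H) LinearMap.id ∘ₗ T₂ k H ∘ₗ
      TensorProduct.map ((Coalgebra.comul (R := k) (A := H)).rTensor H)
        ((Coalgebra.comul (R := k) (A := H)).rTensor H) := by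
  ext a b c d
  simp [ttt]

lemma P2 : TensorProduct.map LinearMap.id (δH k H) ∘ₗ ttt k H =
    TensorProduct.map LinearMap.id (ttt k H) ∘ₗ T₂' k H ∘ₗ
      TensorProduct.map ((Coalgebra.comul (R := k) (A := H)).lTensor H)
        ((Coalgebra.comul (R := k) (A := H)).lTensor H) := by
  ext a b c d
  simp [ttt]

lemma P3 : (TensorProduct.assoc k (H ⊗[k] H) (H ⊗[k] H) (H ⊗[k] H)).toLinearMap ∘ₗ
      TensorProduct.map (ttt k H) LinearMap.id ∘ₗ T₂ k H =
    TensorProduct.map LinearMap.id (ttt k H) ∘ₗ T₂' k H ∘ₗ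
      TensorProduct.map (TensorProduct.assoc k H H H).toLinearMap
        (TensorProduct.assoc k H H H).toLinearMap := by
  ext a b c d e f
  simp [ttt]

lemma δH_coassoc :
    (TensorProduct.assoc k (H ⊗[k] H) (H ⊗[k] H) (H ⊗[k] H)).toLinearMap ∘ₗ
      TensorProduct.map (δH k H) LinearMap.id ∘ₗ δH k H =
    TensorProduct.map LinearMap.id (δH k H) ∘ₗ δH k H := by
  ext a b
  have h1 := LinearMap.congr_fun (P1 (k := k) (H := H))
    ((Coalgebra.comul (R := k) a) ⊗ₜ (Coalgebra.comul (R := k) b))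
  have h2 := LinearMap.congr_fun (P2 (k := k) (H := H))
    ((Coalgebra.comul (R := k) a) ⊗ₜ (Coalgebra.comul (R := k) b))
  simp only [AlgebraTensorModule.curry_apply, TensorProduct.curry_apply,
    LinearMap.coe_restrictScalars, LinearMap.coe_comp, Function.comp_apply,
    TensorProduct.map_tmul, LinearMap.id_coe, id_eq] at h1 h2 ⊢
  rw [δH_tmul, h1, h2]
  have h3 := LinearMap.congr_fun (P3 (k := k) (H := H))
    (((Coalgebra.comul (R := k) (A := H)).rTensor H (Coalgebra.comul (R := k) a)) ⊗ₜ
      ((Coalgebra.comul (R := k) (A := H)).rTensor H (Coalgebra.comul (R := k) b)))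
  simp only [LinearMap.coe_comp, Function.comp_apply, TensorProduct.map_tmul] at h3
  rw [h3]
  simp only [LinearEquiv.coe_coe]
  have h4 : ∀ x : H, (TensorProduct.assoc k H H H)
      ((LinearMap.rTensor H (Coalgebra.comul (R := k))) (Coalgebra.comul (R := k) x)) =
      (LinearMap.lTensor H (Coalgebra.comul (R := k))) (Coalgebra.comul (R := k) x) :=
    fun x => Coalgebra.coassoc_apply x
  rw [h4 a, h4 b]

end coassoc

section convMonoid

variable (k H) in
/-- `x ↦ (ε x₁) • x₂` -/
noncomputable def gl : H ⊗[k] H →ₗ[k] H :=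
  (TensorProduct.lid k H).toLinearMap ∘ₗ (Coalgebra.counit (R := k) (A := H)).rTensor H

variable (k H) in
noncomputable def gr : H ⊗[k] H →ₗ[k] H :=
  (TensorProduct.rid k H).toLinearMap ∘ₗ (Coalgebra.counit (R := k) (A := H)).lTensor H

@[simp] lemma gl_comul (a : H) : gl k H (Coalgebra.comul (R := k) a) = a := by
  simp [gl]

@[simp] lemma gr_comul (a : H) : gr k H (Coalgebra.comul (R := k) a) = a := by
  simp [gr]

lemma Q1 (f : H ⊗[k] H →ₗ[k] H) :
    LinearMap.mul' k H ∘ₗ TensorProduct.map (eConv k H) f ∘ₗ ttt k H =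
      f ∘ₗ TensorProduct.map (gl k H) (gl k H) := by
  ext a b c d
  simp only [AlgebraTensorModule.curry_apply, TensorProduct.curry_apply,
    LinearMap.coe_restrictScalars, LinearMap.coe_comp, Function.comp_apply, ttt,
    LinearEquiv.coe_coe, TensorProduct.tensorTensorTensorComm_tmul, TensorProduct.map_tmul,
    eConv_tmul, gl, TensorProduct.lid_tmul, LinearMap.rTensor_tmul, LinearMap.mul'_apply]
  rw [TensorProduct.tmul_smul, ← TensorProduct.smul_tmul', map_smul, map_smul,
    smul_smul, Algebra.smul_def, map_mul, mul_comm (Coalgebra.counit (R := k) (A := H) c),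
    mul_assoc]
  rw [map_mul, mul_assoc]

lemma Q2 (f : H ⊗[k] H →ₗ[k] H) :
    LinearMap.mul' k H ∘ₗ TensorProduct.map f (eConv k H) ∘ₗ ttt k H =
      f ∘ₗ TensorProduct.map (gr k H) (gr k H) := by
  ext a b c d
  simp only [AlgebraTensorModule.curry_apply, TensorProduct.curry_apply,
    LinearMap.coe_restrictScalars, LinearMap.coe_comp, Function.comp_apply, ttt,
    LinearEquiv.coe_coe, TensorProduct.tensorTensorTensorComm_tmul, TensorProduct.map_tmul,
    eConv_tmul, gr, TensorProduct.rid_tmul, LinearMap.lTensor_tmul, LinearMap.mul'_apply]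
  rw [TensorProduct.tmul_smul, ← TensorProduct.smul_tmul', map_smul, map_smul,
    smul_smul, Algebra.smul_def, Algebra.commutes,
    mul_comm (Coalgebra.counit (R := k) (A := H) d)]

lemma conv_unit_left (f : H ⊗[k] H →ₗ[k] H) : conv (eConv k H) f = f := by
  ext a b
  have := LinearMap.congr_fun (Q1 (k := k) (H := H) f)
    ((Coalgebra.comul (R := k) a) ⊗ₜ (Coalgebra.comul (R := k) b))
  simp only [LinearMap.coe_comp, Function.comp_apply, TensorProduct.map_tmul] at this
  simp only [AlgebraTensorModule.curry_apply, TensorProduct.curry_apply,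
    LinearMap.coe_restrictScalars, LinearMap.coe_comp, Function.comp_apply]
  rw [conv_apply, δH_tmul, this, gl_comul, gl_comul]

lemma conv_unit_right (f : H ⊗[k] H →ₗ[k] H) : conv f (eConv k H) = f := by
  ext a b
  have := LinearMap.congr_fun (Q2 (k := k) (H := H) f)
    ((Coalgebra.comul (R := k) a) ⊗ₜ (Coalgebra.comul (R := k) b))
  simp only [LinearMap.coe_comp, Function.comp_apply, TensorProduct.map_tmul] at this
  simp only [AlgebraTensorModule.curry_apply, TensorProduct.curry_apply,
    LinearMap.coe_restrictScalars, LinearMap.coe_comp, Function.comp_apply]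
  rw [conv_apply, δH_tmul, this, gr_comul, gr_comul]

lemma map_conv_left (f g h : H ⊗[k] H →ₗ[k] H) :
    TensorProduct.map (conv f g) h =
      TensorProduct.map (LinearMap.mul' k H) LinearMap.id ∘ₗ
        TensorProduct.map (TensorProduct.map f g) h ∘ₗ
          TensorProduct.map (δH k H) LinearMap.id := by
  ext a b c d
  simp only [AlgebraTensorModule.curry_apply, TensorProduct.curry_apply,
    LinearMap.coe_restrictScalars, LinearMap.coe_comp, Function.comp_apply,
    TensorProduct.map_tmul, LinearMap.id_coe, id_eq, conv_apply]

lemma map_conv_right (f g h : H ⊗[k] H →ₗ[k] H) :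
    TensorProduct.map f (conv g h) =
      TensorProduct.map LinearMap.id (LinearMap.mul' k H) ∘ₗ
        TensorProduct.map f (TensorProduct.map g h) ∘ₗ
          TensorProduct.map LinearMap.id (δH k H) := by
  ext a b c d
  simp only [AlgebraTensorModule.curry_apply, TensorProduct.curry_apply,
    LinearMap.coe_restrictScalars, LinearMap.coe_comp, Function.comp_apply,
    TensorProduct.map_tmul, LinearMap.id_coe, id_eq, conv_apply]

lemma mul'_assoc :
    LinearMap.mul' k H ∘ₗ TensorProduct.map (LinearMap.mul' k H) LinearMap.id =
      LinearMap.mul' k H ∘ₗ TensorProduct.map LinearMap.id (LinearMap.mul' k H) ∘ₗ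
        (TensorProduct.assoc k H H H).toLinearMap := by
  ext a b c
  simp [mul_assoc]

lemma assoc_nat (f g h : H ⊗[k] H →ₗ[k] H) :
    TensorProduct.map f (TensorProduct.map g h) ∘ₗ
        (TensorProduct.assoc k (H ⊗[k] H) (H ⊗[k] H) (H ⊗[k] H)).toLinearMap =
      (TensorProduct.assoc k H H H).toLinearMap ∘ₗ
        TensorProduct.map (TensorProduct.map f g) h := by
  ext a b c d e f'
  simp

lemma conv_assoc (f g h : H ⊗[k] H →ₗ[k] H) :
    conv (conv f g) h = conv f (conv g h) := by
  apply LinearMap.ext; intro x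
  rw [conv_apply, conv_apply, map_conv_left, map_conv_right]
  simp only [LinearMap.coe_comp, Function.comp_apply]
  have hco := LinearMap.congr_fun (δH_coassoc (k := k) (H := H)) x
  simp only [LinearMap.coe_comp, Function.comp_apply] at hco
  rw [← hco]
  have hnat := LinearMap.congr_fun (assoc_nat (k := k) (H := H) f g h)
    (TensorProduct.map (δH k H) LinearMap.id (δH k H x))
  simp only [LinearMap.coe_comp, Function.comp_apply] at hnat
  rw [hnat]
  have hmul := LinearMap.congr_fun (mul'_assoc (k := k) (H := H))
    (TensorProduct.map (TensorProduct.map f g) h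
      (TensorProduct.map (δH k H) LinearMap.id (δH k H x)))
  simp only [LinearMap.coe_comp, Function.comp_apply] at hmul
  rw [hmul]

end convMonoid

section antipode

open HopfAlgebra

lemma antipode_one' : HopfAlgebra.antipode (R := k) (1 : H) = 1 := by
  have := HopfAlgebra.mul_antipode_rTensor_comul_apply (R := k) (a := (1 : H))
  rw [Bialgebra.comul_one, Algebra.TensorProduct.one_def] at this
  simpa using this

lemma mulmul_ttt (s t : H ⊗[k] H) :
    TensorProduct.map (LinearMap.mul' k H) (LinearMap.mul' k H) (ttt k H (s ⊗ₜ t)) = s * t := by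
  induction s using TensorProduct.induction_on with
  | zero => simp [ttt]
  | tmul a b =>
    induction t using TensorProduct.induction_on with
    | zero => simp [ttt]
    | tmul c d => simp [ttt, Algebra.TensorProduct.tmul_mul_tmul]
    | add x y hx hy =>
      rw [TensorProduct.tmul_add, map_add, map_add, hx, hy, mul_add]
  | add x y hx hy =>
    rw [TensorProduct.add_tmul, map_add, map_add, hx, hy, add_mul]

lemma conv_SmulL :
    conv ((HopfAlgebra.antipode (R := k) (A := H)) ∘ₗ LinearMap.mul' k H)
      (LinearMap.mul' k H) = eConv k H := by
  ext a b
  simp only [AlgebraTensorModule.curry_apply, TensorProduct.curry_apply,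
    LinearMap.coe_restrictScalars, LinearMap.coe_comp, Function.comp_apply]
  rw [conv_apply, δH_tmul]
  have hdec : TensorProduct.map
      ((HopfAlgebra.antipode (R := k) (A := H)) ∘ₗ LinearMap.mul' k H) (LinearMap.mul' k H) =
      TensorProduct.map (HopfAlgebra.antipode (R := k) (A := H)) LinearMap.id ∘ₗ
        TensorProduct.map (LinearMap.mul' k H) (LinearMap.mul' k H) := by
    rw [← TensorProduct.map_comp, LinearMap.id_comp]
  rw [hdec]
  simp only [LinearMap.coe_comp, Function.comp_apply]
  rw [mulmul_ttt, ← Bialgebra.comul_mul]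
  have : TensorProduct.map (HopfAlgebra.antipode (R := k) (A := H)) LinearMap.id =
      (HopfAlgebra.antipode (R := k) (A := H)).rTensor H := rfl
  rw [this, HopfAlgebra.mul_antipode_rTensor_comul_apply, Bialgebra.counit_mul, eConv_tmul]

lemma chi_eq :
    LinearMap.mul' k H ∘ₗ
        TensorProduct.map (LinearMap.mul' k H)
          (_root_.mulOp k H ∘ₗ TensorProduct.map (HopfAlgebra.antipode (R := k))
            (HopfAlgebra.antipode (R := k))) ∘ₗ ttt k H =
      LinearMap.mul' k H ∘ₗ
        TensorProduct.map LinearMap.id (LinearMap.mul' k H) ∘ₗ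
        TensorProduct.map LinearMap.id
          (TensorProduct.map LinearMap.id (HopfAlgebra.antipode (R := k))) ∘ₗ
        TensorProduct.map LinearMap.id (TensorProduct.comm k H H).toLinearMap ∘ₗ
        (TensorProduct.assoc k H H H).toLinearMap ∘ₗ
        TensorProduct.map LinearMap.id
          (LinearMap.mul' k H ∘ₗ
            TensorProduct.map LinearMap.id (HopfAlgebra.antipode (R := k))) := by
  ext a b c d
  simp [ttt, mulOp, mul_assoc]

lemma rho_eq (s : H ⊗[k] H) (r : k) :
    LinearMap.mul' k H
      (TensorProduct.map LinearMap.id (LinearMap.mul' k H)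
        (TensorProduct.map LinearMap.id
          (TensorProduct.map LinearMap.id (HopfAlgebra.antipode (R := k)))
          (TensorProduct.map LinearMap.id (TensorProduct.comm k H H).toLinearMap
            ((TensorProduct.assoc k H H H).toLinearMap (s ⊗ₜ algebraMap k H r))))) =
      r • LinearMap.mul' k H
        (TensorProduct.map LinearMap.id (HopfAlgebra.antipode (R := k)) s) := by
  induction s using TensorProduct.induction_on with
  | zero =>
    rw [TensorProduct.zero_tmul]
    simp only [map_zero, smul_zero]
  | tmul x y =>
    simp only [LinearEquiv.coe_coe, TensorProduct.assoc_tmul, TensorProduct.map_tmul,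
      LinearMap.id_coe, id_eq, TensorProduct.comm_tmul, LinearMap.mul'_apply]
    rw [← mul_assoc, ← Algebra.commutes, mul_assoc, Algebra.smul_def]
  | add x y hx hy =>
    rw [TensorProduct.add_tmul]
    simp only [map_add, smul_add]
    rw [hx, hy]

lemma conv_mulSR :
    conv (LinearMap.mul' k H)
      (_root_.mulOp k H ∘ₗ TensorProduct.map (HopfAlgebra.antipode (R := k))
        (HopfAlgebra.antipode (R := k))) = eConv k H := by
  ext a b
  simp only [AlgebraTensorModule.curry_apply, TensorProduct.curry_apply,
    LinearMap.coe_restrictScalars, LinearMap.coe_comp, Function.comp_apply]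
  rw [conv_apply, δH_tmul]
  have h1 := LinearMap.congr_fun (chi_eq (k := k) (H := H))
    ((Coalgebra.comul (R := k) a) ⊗ₜ (Coalgebra.comul (R := k) b))
  simp only [LinearMap.coe_comp, Function.comp_apply] at h1
  rw [h1]
  rw [TensorProduct.map_tmul, LinearMap.id_coe, id_eq]
  have hb : (LinearMap.mul' k H ∘ₗ
      TensorProduct.map LinearMap.id (HopfAlgebra.antipode (R := k)))
        (Coalgebra.comul (R := k) b) = algebraMap k H (Coalgebra.counit (R := k) b) := by
    have : TensorProduct.map LinearMap.id (HopfAlgebra.antipode (R := k) (A := H)) =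
        (HopfAlgebra.antipode (R := k) (A := H)).lTensor H := rfl
    simp only [LinearMap.coe_comp, Function.comp_apply, this]
    exact HopfAlgebra.mul_antipode_lTensor_comul_apply b
  rw [hb, rho_eq]
  have ha : LinearMap.mul' k H
      (TensorProduct.map LinearMap.id (HopfAlgebra.antipode (R := k))
        (Coalgebra.comul (R := k) a)) = algebraMap k H (Coalgebra.counit (R := k) a) := by
    have : TensorProduct.map LinearMap.id (HopfAlgebra.antipode (R := k) (A := H)) =
        (HopfAlgebra.antipode (R := k) (A := H)).lTensor H := rfl
    rw [this]
    exact HopfAlgebra.mul_antipode_lTensor_comul_apply a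
  rw [ha, eConv_tmul, Algebra.smul_def, ← map_mul, mul_comm]

lemma antipode_mul_linear :
    (HopfAlgebra.antipode (R := k) (A := H)) ∘ₗ LinearMap.mul' k H =
      _root_.mulOp k H ∘ₗ TensorProduct.map (HopfAlgebra.antipode (R := k))
        (HopfAlgebra.antipode (R := k)) := by
  have h1 : conv ((HopfAlgebra.antipode (R := k) (A := H)) ∘ₗ LinearMap.mul' k H)
      (LinearMap.mul' k H) = eConv k H := conv_SmulL
  have h2 : conv (LinearMap.mul' k H)
      (_root_.mulOp k H ∘ₗ TensorProduct.map (HopfAlgebra.antipode (R := k))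
        (HopfAlgebra.antipode (R := k))) = eConv k H := conv_mulSR
  calc (HopfAlgebra.antipode (R := k) (A := H)) ∘ₗ LinearMap.mul' k H
      = conv ((HopfAlgebra.antipode (R := k) (A := H)) ∘ₗ LinearMap.mul' k H) (eConv k H) := by
        rw [conv_unit_right]
    _ = conv ((HopfAlgebra.antipode (R := k) (A := H)) ∘ₗ LinearMap.mul' k H)
          (conv (LinearMap.mul' k H)
            (_root_.mulOp k H ∘ₗ TensorProduct.map (HopfAlgebra.antipode (R := k))
              (HopfAlgebra.antipode (R := k)))) := by rw [h2]
    _ = conv (conv ((HopfAlgebra.antipode (R := k) (A := H)) ∘ₗ LinearMap.mul' k H)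
          (LinearMap.mul' k H))
          (_root_.mulOp k H ∘ₗ TensorProduct.map (HopfAlgebra.antipode (R := k))
            (HopfAlgebra.antipode (R := k))) := by rw [conv_assoc]
    _ = conv (eConv k H) (_root_.mulOp k H ∘ₗ TensorProduct.map (HopfAlgebra.antipode (R := k))
          (HopfAlgebra.antipode (R := k))) := by rw [h1]
    _ = _root_.mulOp k H ∘ₗ TensorProduct.map (HopfAlgebra.antipode (R := k))
          (HopfAlgebra.antipode (R := k)) := conv_unit_left _

lemma antipode_mul' (a b : H) :
    HopfAlgebra.antipode (R := k) (a * b) =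
      HopfAlgebra.antipode (R := k) b * HopfAlgebra.antipode (R := k) a := by
  have := LinearMap.congr_fun (antipode_mul_linear (k := k) (H := H)) (a ⊗ₜ b)
  simpa [mulOp] using this

end antipode

section drinfeld

open HopfAlgebra

variable (k H) in
/-- `y ⊗ (z ⊗ w) ↦ S²(w) * S(z) * y` -/
noncomputable def phi : H ⊗[k] (H ⊗[k] H) →ₗ[k] H :=
  _root_.mulOp k H ∘ₗ TensorProduct.map LinearMap.id
    (_root_.mulOp k H ∘ₗ TensorProduct.map (HopfAlgebra.antipode (R := k))
      ((HopfAlgebra.antipode (R := k)) ∘ₗ (HopfAlgebra.antipode (R := k))))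

@[simp] lemma phi_tmul (y z w : H) :
    phi k H (y ⊗ₜ (z ⊗ₜ w)) =
      HopfAlgebra.antipode (R := k) (HopfAlgebra.antipode (R := k) w) *
        HopfAlgebra.antipode (R := k) z * y := by
  simp [phi, mulOp, mul_assoc]

@[simp] lemma leg12_tmul (a b : H) : leg12 k H (a ⊗ₜ b) = a ⊗ₜ (b ⊗ₜ 1) := by
  simp [leg12]

@[simp] lemma comulLeft_tmul (y w : H) :
    comulLeft k H (y ⊗ₜ w) =
      (TensorProduct.assoc k H H H) ((Coalgebra.comul (R := k) y) ⊗ₜ w) := by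
  simp [comulLeft]

lemma leg12_mul_assoc (p s : H ⊗[k] H) (w : H) :
    (leg12 k H p) * ((TensorProduct.assoc k H H H) (s ⊗ₜ w)) =
      (TensorProduct.assoc k H H H) ((p * s) ⊗ₜ w) := by
  induction p using TensorProduct.induction_on with
  | zero => simp
  | tmul a b =>
    induction s using TensorProduct.induction_on with
    | zero => simp
    | tmul c d =>
      simp [Algebra.TensorProduct.tmul_mul_tmul]
    | add x y hx hy =>
      rw [TensorProduct.add_tmul, map_add, mul_add, hx, hy, mul_add, TensorProduct.add_tmul,
        map_add]
  | add x y hx hy =>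
    rw [map_add, add_mul, hx, hy, add_mul, TensorProduct.add_tmul, map_add]

lemma assoc_mul_leg12 (p s : H ⊗[k] H) (w : H) :
    ((TensorProduct.assoc k H H H) (s ⊗ₜ w)) * (leg12 k H p) =
      (TensorProduct.assoc k H H H) ((s * p) ⊗ₜ w) := by
  induction p using TensorProduct.induction_on with
  | zero => simp
  | tmul a b =>
    induction s using TensorProduct.induction_on with
    | zero => simp
    | tmul c d =>
      simp [Algebra.TensorProduct.tmul_mul_tmul]
    | add x y hx hy =>
      rw [TensorProduct.add_tmul, map_add, add_mul, hx, hy, add_mul, TensorProduct.add_tmul,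
        map_add]
  | add x y hx hy =>
    rw [map_add, mul_add, hx, hy, mul_add, TensorProduct.add_tmul, map_add]

variable (k H) in
/-- `y ⊗ w ↦ τ(Δ y) ⊗ w` (reassociated) -/
noncomputable def sigmaMap : H ⊗[k] H →ₗ[k] H ⊗[k] (H ⊗[k] H) :=
  (TensorProduct.assoc k H H H).toLinearMap ∘ₗ
    TensorProduct.map ((TensorProduct.comm k H H).toLinearMap ∘ₗ Coalgebra.comul (R := k))
      LinearMap.id

@[simp] lemma sigmaMap_tmul (y w : H) :
    sigmaMap k H (y ⊗ₜ w) =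
      (TensorProduct.assoc k H H H)
        ((TensorProduct.comm k H H (Coalgebra.comul (R := k) y)) ⊗ₜ w) := by
  simp [sigmaMap]

lemma commAlg_eq (t : H ⊗[k] H) :
    (Algebra.TensorProduct.comm k H H) t = (TensorProduct.comm k H H) t := by
  induction t using TensorProduct.induction_on with
  | zero => simp
  | tmul a b => simp
  | add x y hx hy => rw [map_add, map_add, hx, hy]

lemma threeLeg (R : H ⊗[k] H)
    (hconj : ∀ X : H,
      (Algebra.TensorProduct.comm k H H) (Coalgebra.comul (R := k) X) * R =
        R * Coalgebra.comul (R := k) X)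
    (t : H ⊗[k] H) :
    leg12 k H R * comulLeft k H t = sigmaMap k H t * leg12 k H R := by
  induction t using TensorProduct.induction_on with
  | zero => simp
  | tmul y w =>
    rw [comulLeft_tmul, sigmaMap_tmul, leg12_mul_assoc, assoc_mul_leg12, ← commAlg_eq,
      hconj y]
  | add x y hx hy =>
    rw [map_add, mul_add, hx, hy, map_add, add_mul]

lemma Lambda_eq (a b : H) :
    phi k H ∘ₗ LinearMap.mulLeft k (leg12 k H (a ⊗ₜ b)) =
      _root_.mulOp k H ∘ₗ TensorProduct.map
        (LinearMap.mulLeft k (HopfAlgebra.antipode (R := k) b * a))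
        (_root_.mulOp k H ∘ₗ TensorProduct.map (HopfAlgebra.antipode (R := k))
          ((HopfAlgebra.antipode (R := k)) ∘ₗ (HopfAlgebra.antipode (R := k)))) := by
  ext y z w
  simp only [AlgebraTensorModule.curry_apply, TensorProduct.curry_apply,
    LinearMap.coe_restrictScalars, LinearMap.coe_comp, Function.comp_apply,
    LinearMap.mulLeft_apply, leg12_tmul, Algebra.TensorProduct.tmul_mul_tmul, one_mul,
    phi_tmul, TensorProduct.map_tmul, mulOp, LinearEquiv.coe_coe, TensorProduct.comm_tmul,
    LinearMap.mul'_apply, antipode_mul']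
  simp [mul_assoc]

lemma inner_comul :
    (_root_.mulOp k H ∘ₗ TensorProduct.map (HopfAlgebra.antipode (R := k) (A := H))
        ((HopfAlgebra.antipode (R := k)) ∘ₗ (HopfAlgebra.antipode (R := k)))) ∘ₗ
      Coalgebra.comul (R := k) =
    Algebra.linearMap k H ∘ₗ Coalgebra.counit (R := k) := by
  have hsplit : TensorProduct.map (HopfAlgebra.antipode (R := k) (A := H))
      ((HopfAlgebra.antipode (R := k) (A := H)) ∘ₗ (HopfAlgebra.antipode (R := k))) =
      TensorProduct.map (HopfAlgebra.antipode (R := k)) (HopfAlgebra.antipode (R := k)) ∘ₗ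
        TensorProduct.map LinearMap.id (HopfAlgebra.antipode (R := k)) := by
    rw [← TensorProduct.map_comp, LinearMap.comp_id]
  rw [hsplit, ← LinearMap.comp_assoc]
  rw [show _root_.mulOp k H ∘ₗ TensorProduct.map (HopfAlgebra.antipode (R := k) (A := H))
      (HopfAlgebra.antipode (R := k)) =
      (HopfAlgebra.antipode (R := k) (A := H)) ∘ₗ LinearMap.mul' k H from
    (antipode_mul_linear).symm]
  have hlt : TensorProduct.map LinearMap.id (HopfAlgebra.antipode (R := k) (A := H)) =
      (HopfAlgebra.antipode (R := k) (A := H)).lTensor H := rfl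
  rw [hlt, LinearMap.comp_assoc, LinearMap.comp_assoc,
    HopfAlgebra.mul_antipode_lTensor_comul, ← LinearMap.comp_assoc]
  congr 1
  apply LinearMap.ext_ring
  simp [antipode_one']

lemma mulOp_counit_collapse (c : H) (x : H) :
    _root_.mulOp k H (TensorProduct.map (LinearMap.mulLeft k c)
      (Algebra.linearMap k H ∘ₗ Coalgebra.counit (R := k)) (Coalgebra.comul (R := k) x)) =
      c * x := by
  have hsplit : TensorProduct.map (LinearMap.mulLeft k c)
      (Algebra.linearMap k H ∘ₗ Coalgebra.counit (R := k) (A := H)) =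
      TensorProduct.map (LinearMap.mulLeft k c) (Algebra.linearMap k H) ∘ₗ
        LinearMap.lTensor H (Coalgebra.counit (R := k)) := by
    rw [show LinearMap.lTensor H (Coalgebra.counit (R := k) (A := H)) =
      TensorProduct.map LinearMap.id (Coalgebra.counit (R := k)) from rfl,
      ← TensorProduct.map_comp, LinearMap.comp_id]
  rw [hsplit]
  simp only [LinearMap.coe_comp, Function.comp_apply]
  rw [Coalgebra.lTensor_counit_comul]
  simp [mulOp]

lemma phi_leg12_mul (p : H ⊗[k] H) (x : H) :
    phi k H (leg12 k H p * comulLeft k H (Coalgebra.comul (R := k) x)) =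
      drinfeldElement k H p * x := by
  induction p using TensorProduct.induction_on with
  | zero => simp [drinfeldElement]
  | tmul a b =>
    have h1 := LinearMap.congr_fun (Lambda_eq (k := k) (H := H) a b)
      (comulLeft k H (Coalgebra.comul (R := k) x))
    simp only [LinearMap.coe_comp, Function.comp_apply, LinearMap.mulLeft_apply] at h1
    rw [h1]
    have h2 : comulLeft k H (Coalgebra.comul (R := k) x) =
        LinearMap.lTensor H (Coalgebra.comul (R := k)) (Coalgebra.comul (R := k) x) := by
      rw [show comulLeft k H = (TensorProduct.assoc k H H H).toLinearMap ∘ₗ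
        LinearMap.rTensor H (Coalgebra.comul (R := k)) from rfl]
      simp only [LinearMap.coe_comp, Function.comp_apply, LinearEquiv.coe_coe]
      exact Coalgebra.coassoc_apply x
    rw [h2]
    have h3 : TensorProduct.map
        (LinearMap.mulLeft k (HopfAlgebra.antipode (R := k) b * a))
        (_root_.mulOp k H ∘ₗ TensorProduct.map (HopfAlgebra.antipode (R := k))
          ((HopfAlgebra.antipode (R := k)) ∘ₗ (HopfAlgebra.antipode (R := k)))) ∘ₗ
        LinearMap.lTensor H (Coalgebra.comul (R := k)) =
        TensorProduct.map (LinearMap.mulLeft k (HopfAlgebra.antipode (R := k) b * a))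
          (Algebra.linearMap k H ∘ₗ Coalgebra.counit (R := k)) := by
      rw [show LinearMap.lTensor H (Coalgebra.comul (R := k) (A := H)) =
        TensorProduct.map LinearMap.id (Coalgebra.comul (R := k)) from rfl,
        ← TensorProduct.map_comp, LinearMap.comp_id, inner_comul]
    have h4 := LinearMap.congr_fun h3 (Coalgebra.comul (R := k) x)
    simp only [LinearMap.coe_comp, Function.comp_apply] at h4
    rw [h4, mulOp_counit_collapse]
    simp [drinfeldElement, mulOp]
  | add p q hp hq =>
    have hd : drinfeldElement k H (p + q) =
        drinfeldElement k H p + drinfeldElement k H q := by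
      simp [drinfeldElement, map_add]
    rw [map_add, add_mul, map_add, hp, hq, hd, add_mul]


variable (k H) in
noncomputable def nMap (a b : H) : H ⊗[k] (H ⊗[k] H) →ₗ[k] H :=
  LinearMap.mulRight k a ∘ₗ _root_.mulOp k H ∘ₗ
    TensorProduct.map
      (LinearMap.mulLeft k (HopfAlgebra.antipode (R := k) b) ∘ₗ
        (LinearMap.mul' k H ∘ₗ
          TensorProduct.map (HopfAlgebra.antipode (R := k)) LinearMap.id))
      ((HopfAlgebra.antipode (R := k)) ∘ₗ (HopfAlgebra.antipode (R := k))) ∘ₗ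
    (TensorProduct.assoc k H H H).symm.toLinearMap

lemma phi_sigma_pure (a b : H) (s : H ⊗[k] H) (w : H) :
    phi k H ((TensorProduct.assoc k H H H) ((TensorProduct.comm k H H s) ⊗ₜ w) *
        leg12 k H (a ⊗ₜ b)) =
      nMap k H a b ((TensorProduct.assoc k H H H) (s ⊗ₜ w)) := by
  induction s using TensorProduct.induction_on with
  | zero => simp [nMap]
  | tmul y1 y2 =>
    simp only [TensorProduct.comm_tmul, TensorProduct.assoc_tmul, leg12_tmul,
      Algebra.TensorProduct.tmul_mul_tmul, mul_one, phi_tmul, nMap, LinearMap.coe_comp,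
      Function.comp_apply, LinearEquiv.coe_coe, TensorProduct.assoc_symm_tmul,
      TensorProduct.map_tmul, LinearMap.mul'_apply, LinearMap.mulLeft_apply,
      LinearMap.mulRight_apply, LinearMap.id_coe, id_eq, mulOp, antipode_mul']
    simp [mul_assoc]
  | add x y hx hy =>
    rw [map_add, TensorProduct.add_tmul, map_add, add_mul, map_add, hx, hy,
      TensorProduct.add_tmul, map_add, map_add]

lemma phi_sigma_t (a b : H) (t : H ⊗[k] H) :
    phi k H (sigmaMap k H t * leg12 k H (a ⊗ₜ b)) = nMap k H a b (comulLeft k H t) := by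
  induction t using TensorProduct.induction_on with
  | zero => simp
  | tmul y w => rw [sigmaMap_tmul, comulLeft_tmul, phi_sigma_pure]
  | add x y hx hy => rw [map_add, add_mul, map_add, hx, hy, map_add, map_add]

lemma nMap_comul (a b : H) (x : H) :
    nMap k H a b (comulLeft k H (Coalgebra.comul (R := k) x)) =
      HopfAlgebra.antipode (R := k) (HopfAlgebra.antipode (R := k) x) *
        (HopfAlgebra.antipode (R := k) b * a) := by
  rw [show comulLeft k H (Coalgebra.comul (R := k) x) =
    (TensorProduct.assoc k H H H).toLinearMap
      (LinearMap.rTensor H (Coalgebra.comul (R := k)) (Coalgebra.comul (R := k) x)) from rfl]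
  simp only [nMap, LinearMap.coe_comp, Function.comp_apply, LinearEquiv.coe_coe]
  rw [LinearEquiv.symm_apply_apply]
  have hcomp : TensorProduct.map
      (LinearMap.mulLeft k (HopfAlgebra.antipode (R := k) b) ∘ₗ
        (LinearMap.mul' k H ∘ₗ
          TensorProduct.map (HopfAlgebra.antipode (R := k)) LinearMap.id))
      ((HopfAlgebra.antipode (R := k) (A := H)) ∘ₗ (HopfAlgebra.antipode (R := k))) ∘ₗ
      LinearMap.rTensor H (Coalgebra.comul (R := k)) =
      TensorProduct.map (LinearMap.mulLeft k (HopfAlgebra.antipode (R := k) b) ∘ₗ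
          (Algebra.linearMap k H ∘ₗ Coalgebra.counit (R := k)))
        ((HopfAlgebra.antipode (R := k) (A := H)) ∘ₗ (HopfAlgebra.antipode (R := k))) := by
    rw [show LinearMap.rTensor H (Coalgebra.comul (R := k) (A := H)) =
      TensorProduct.map (Coalgebra.comul (R := k)) LinearMap.id from rfl,
      ← TensorProduct.map_comp, LinearMap.comp_id, LinearMap.comp_assoc,
      LinearMap.comp_assoc,
      show TensorProduct.map (HopfAlgebra.antipode (R := k) (A := H)) LinearMap.id =
        (HopfAlgebra.antipode (R := k) (A := H)).rTensor H from rfl,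
      HopfAlgebra.mul_antipode_rTensor_comul]
  have h1 := LinearMap.congr_fun hcomp (Coalgebra.comul (R := k) x)
  simp only [LinearMap.coe_comp, Function.comp_apply] at h1
  rw [h1]
  have hsplit : TensorProduct.map (LinearMap.mulLeft k (HopfAlgebra.antipode (R := k) b) ∘ₗ
        (Algebra.linearMap k H ∘ₗ Coalgebra.counit (R := k) (A := H)))
      ((HopfAlgebra.antipode (R := k) (A := H)) ∘ₗ (HopfAlgebra.antipode (R := k))) =
      TensorProduct.map (LinearMap.mulLeft k (HopfAlgebra.antipode (R := k) b) ∘ₗ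
          Algebra.linearMap k H)
        ((HopfAlgebra.antipode (R := k) (A := H)) ∘ₗ (HopfAlgebra.antipode (R := k))) ∘ₗ
        LinearMap.rTensor H (Coalgebra.counit (R := k)) := by
    rw [show LinearMap.rTensor H (Coalgebra.counit (R := k) (A := H)) =
      TensorProduct.map (Coalgebra.counit (R := k)) LinearMap.id from rfl,
      ← TensorProduct.map_comp, LinearMap.comp_id, LinearMap.comp_assoc]
  rw [hsplit]
  simp only [LinearMap.coe_comp, Function.comp_apply]
  rw [Coalgebra.rTensor_counit_comul]
  simp [mulOp, mul_assoc]

lemma phi_sigma_mul (p : H ⊗[k] H) (x : H) :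
    phi k H (sigmaMap k H (Coalgebra.comul (R := k) x) * leg12 k H p) =
      HopfAlgebra.antipode (R := k) (HopfAlgebra.antipode (R := k) x) *
        drinfeldElement k H p := by
  induction p using TensorProduct.induction_on with
  | zero => simp [drinfeldElement]
  | tmul a b =>
    rw [phi_sigma_t, nMap_comul]
    simp [drinfeldElement, mulOp]
  | add p q hp hq =>
    have hd : drinfeldElement k H (p + q) =
        drinfeldElement k H p + drinfeldElement k H q := by
      simp [drinfeldElement, map_add]
    rw [map_add, mul_add, map_add, hp, hq, hd, mul_add]

end drinfeld


end DrinfeldAux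


open DrinfeldAux in
/-- In a quasi-triangular Hopf algebra, the Drinfeld element `u = Σ S(bᵢ) aᵢ`
satisfies `u X u⁻¹ = S²(X)` for all `X ∈ H`, provided `u` is invertible. -/
theorem drinfeld_element_conj (R : H ⊗[k] H)
    (hRu : IsUnit R)
    (hconj : ∀ X : H,
      (Algebra.TensorProduct.comm k H H) (Coalgebra.comul (R := k) X) * R =
        R * Coalgebra.comul (R := k) X)
    (hhex1 : comulLeft k H R = leg13 k H R * leg23 k H R)
    (hhex2 : comulRight k H R = leg13 k H R * leg12 k H R)
    (hu : IsUnit (drinfeldElement k H R)) :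
    ∀ X : H,
      drinfeldElement k H R * X * ↑hu.unit⁻¹ =
        HopfAlgebra.antipode (R := k) (HopfAlgebra.antipode (R := k) X) := by
  intro X
  have key : drinfeldElement k H R * X =
      HopfAlgebra.antipode (R := k) (HopfAlgebra.antipode (R := k) X) *
        drinfeldElement k H R := by
    have h1 := DrinfeldAux.phi_leg12_mul (k := k) (H := H) R X
    have h3 := DrinfeldAux.threeLeg (k := k) (H := H) R hconj (Coalgebra.comul (R := k) X)
    have h2 := DrinfeldAux.phi_sigma_mul (k := k) (H := H) R X
    rw [← h1, h3, h2]
  rw [key, mul_assoc]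
  rw [IsUnit.mul_val_inv, mul_one]

end
end

section
/- In a braided monoidal category 𝒟 with twist θ and left duality, define the quantum trace of an endomorphism f : V → V as qTr(f) := ẽ_V ∘ ((θ_V ∘ f) ⊗ id_{V*}) ∘ ι_V ∈ End(𝟙), where ẽ_V := e_V ∘ c_{V,V*} ∘ (θ_V ⊗ id). Then the quantum trace is cyclic on 𝒟 in the sense: for f : V → W and g : W → V in a ribbon category, qTr(g ∘ f) = qTr(f ∘ g). -/
open CategoryTheory MonoidalCategory

variable {C : Type*} [Category C] [MonoidalCategory C] [BraidedCategory C]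
  [RightRigidCategory C]

/-- The quantum trace `qTr(f) := ẽ_V ∘ ((θ_V ∘ f) ⊗ id_{V*}) ∘ ι_V` of an endomorphism
`f : V ⟶ V`, where `ẽ_V = e_V ∘ c_{V,V*} ∘ (θ_V ⊗ id_{V*})` is the induced right
evaluation of the ribbon structure. -/
noncomputable def qTr (θ : ∀ V : C, V ≅ V) (V : C) (f : V ⟶ V) : 𝟙_ C ⟶ 𝟙_ C :=
  η_ V (Vᘁ) ≫ (((f ≫ (θ V).hom) ≫ (θ V).hom) ▷ (Vᘁ)) ≫ (β_ V (Vᘁ)).hom ≫ ε_ V (Vᘁ)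

/-- The underlying (non-quantum) trace is cyclic in any braided right rigid category. -/
theorem trace_cyclic {V W : C} (f : V ⟶ W) (h : W ⟶ V) :
    η_ V (Vᘁ) ≫ ((f ≫ h) ▷ (Vᘁ)) ≫ (β_ V (Vᘁ)).hom ≫ ε_ V (Vᘁ) =
    η_ W (Wᘁ) ≫ ((h ≫ f) ▷ (Wᘁ)) ≫ (β_ W (Wᘁ)).hom ≫ ε_ W (Wᘁ) := by
  calc
    η_ V (Vᘁ) ≫ ((f ≫ h) ▷ (Vᘁ)) ≫ (β_ V (Vᘁ)).hom ≫ ε_ V (Vᘁ)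
        = (η_ V (Vᘁ) ≫ f ▷ (Vᘁ)) ≫ (h ▷ (Vᘁ)) ≫ (β_ V (Vᘁ)).hom ≫ ε_ V (Vᘁ) := by
          simp only [comp_whiskerRight, Category.assoc]
    _ = (η_ W (Wᘁ) ≫ W ◁ (fᘁ)) ≫ (h ▷ (Vᘁ)) ≫ (β_ V (Vᘁ)).hom ≫ ε_ V (Vᘁ) := by
          rw [coevaluation_comp_rightAdjointMate]
    _ = η_ W (Wᘁ) ≫ (h ▷ (Wᘁ)) ≫ (V ◁ (fᘁ)) ≫ (β_ V (Vᘁ)).hom ≫ ε_ V (Vᘁ) := by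
          rw [Category.assoc, ← whisker_exchange_assoc]
    _ = η_ W (Wᘁ) ≫ (h ▷ (Wᘁ)) ≫ (β_ V (Wᘁ)).hom ≫ ((fᘁ) ▷ V) ≫ ε_ V (Vᘁ) := by
          rw [BraidedCategory.braiding_naturality_right_assoc]
    _ = η_ W (Wᘁ) ≫ (h ▷ (Wᘁ)) ≫ (β_ V (Wᘁ)).hom ≫ ((Wᘁ) ◁ f) ≫ ε_ W (Wᘁ) := by
          rw [rightAdjointMate_comp_evaluation]
    _ = η_ W (Wᘁ) ≫ (h ▷ (Wᘁ)) ≫ (f ▷ (Wᘁ)) ≫ (β_ W (Wᘁ)).hom ≫ ε_ W (Wᘁ) := by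
          rw [← BraidedCategory.braiding_naturality_left_assoc]
    _ = _ := by simp only [comp_whiskerRight, Category.assoc]

/-- In a ribbon category, the quantum trace is cyclic: for `f : V ⟶ W` and `g : W ⟶ V`,
`qTr(g ∘ f) = qTr(f ∘ g)`. -/
theorem qTr_cyclic
    (θ : ∀ V : C, V ≅ V)
    (nat : ∀ {V W : C} (f : V ⟶ W), f ≫ (θ W).hom = (θ V).hom ≫ f)
    (tw : ∀ V W : C,
      (θ (V ⊗ W)).hom = (β_ V W).hom ≫ (β_ W V).hom ≫ ((θ V).hom ⊗ₘ (θ W).hom))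
    (rib : ∀ V : C, (θ (Vᘁ)).hom = ((θ V).hom)ᘁ)
    {V W : C} (f : V ⟶ W) (g : W ⟶ V) :
    qTr θ V (f ≫ g) = qTr θ W (g ≫ f) := by
  have h1 : ((f ≫ g) ≫ (θ V).hom) ≫ (θ V).hom
      = f ≫ ((θ W).hom ≫ (θ W).hom ≫ g) := by
    simp only [Category.assoc, nat g]
  have h2 : ((g ≫ f) ≫ (θ W).hom) ≫ (θ W).hom
      = ((θ W).hom ≫ (θ W).hom ≫ g) ≫ f := by
    rw [nat (g ≫ f), Category.assoc, nat (g ≫ f)]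
    simp
  rw [qTr, qTr, h1, h2]
  exact trace_cyclic f ((θ W).hom ≫ (θ W).hom ≫ g)
end
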